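/- arXiv:1506.05203 — 5 statements merged into one kernel-verified Lean document; each statement's English description precedes it below -/
import Mathlib

section
/- For two strings x and y of the same length over a linearly ordered alphabet, if x and y are order-isomorphic (i.e., their natural representations are equal: for all i, rank_x(x[i]) = rank_y(y[i]), where rank_x(c) = 1 + |{i : x[i] < c}|), then their prefix representations are equal, i.e., for all i, rank_{x[1..i]}(x[i]) = rank_{y[1..i]}(y[i]). -/
open Finset

/-- `rank_x(c) = 1 + |{j : x[j] < c}|`; the natural representation is `i ↦ rank_x(x[i])`. -/
def natRank {n : ℕ} {α : Type*} [LinearOrder α] (x : Fin n → α) (i : Fin n) : ℕ :=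
  1 + (univ.filter (fun j => x j < x i)).card

/-- The prefix representation: `i ↦ rank_{x[1..i]}(x[i])`. -/
def preRank {n : ℕ} {α : Type*} [LinearOrder α] (x : Fin n → α) (i : Fin n) : ℕ :=
  1 + (univ.filter (fun j => j ≤ i ∧ x j < x i)).card

lemma rank_key {n : ℕ} {γ : Type*} [LinearOrder γ] (z : Fin n → γ) (i j : Fin n) :
    z j < z i ↔ natRank z j < natRank z i := by
  constructor
  · intro hlt
    apply Nat.add_lt_add_left
    apply Finset.card_lt_card
    constructor
    · intro k hk
      simp only [mem_filter, mem_univ, true_and] at hk ⊢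
      exact hk.trans hlt
    · intro hsub
      have := hsub (by simp [hlt] : j ∈ univ.filter (fun k => z k < z i))
      simp at this
  · intro hlt
    by_contra hle
    push_neg at hle
    have hs : (univ.filter (fun k => z k < z i)) ⊆ (univ.filter (fun k => z k < z j)) := by
      intro k hk
      simp only [mem_filter, mem_univ, true_and] at hk ⊢
      exact lt_of_lt_of_le hk hle
    have := Finset.card_le_card hs
    unfold natRank at hlt
    omega

/-- If the natural representations of `x` and `y` are equal, then so are
their prefix representations. -/
theorem stmt0 {n : ℕ} {α β : Type*} [LinearOrder α] [LinearOrder β]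
    (x : Fin n → α) (y : Fin n → β)
    (h : ∀ i, natRank x i = natRank y i) :
    ∀ i, preRank x i = preRank y i := by
  intro i
  unfold preRank
  congr 1
  apply Finset.card_nbij id
  · intro j hj
    simp only [mem_coe, mem_filter, mem_univ, true_and] at hj ⊢
    exact ⟨hj.1, (rank_key y i j).2 (by rw [← h i, ← h j]; exact (rank_key x i j).1 hj.2)⟩
  · intro a _ b _ hab; exact hab
  · intro j hj
    refine ⟨j, ?_, rfl⟩
    simp only [mem_coe, mem_filter, mem_univ, true_and] at hj ⊢
    exact ⟨hj.1, (rank_key x i j).2 (by rw [h i, h j]; exact (rank_key y i j).1 hj.2)⟩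
end

section
/- For strings x and y of the same length b with pairwise distinct characters each, Pre(x) = Pre(y) if and only if Nat(x) = Nat(y). -/
open Finset

private lemma flip_iff {α β : Type*} [LinearOrder α] [LinearOrder β]
    {a a' : α} {c c' : β} (hne : a ≠ a') (hne' : c ≠ c')
    (h : a' < a ↔ c' < c) : a < a' ↔ c < c' := by
  constructor
  · intro hl
    rcases lt_trichotomy c c' with h1 | h1 | h1
    · exact h1
    · exact absurd h1 hne'
    · exact absurd (h.mpr h1) (lt_asymm hl)
  · intro hl
    rcases lt_trichotomy a a' with h1 | h1 | h1
    · exact h1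
    · exact absurd h1 hne
    · exact absurd (h.mp h1) (lt_asymm hl)

private lemma natRank_lt_iff {n : ℕ} {α : Type*} [LinearOrder α] (x : Fin n → α) (i j : Fin n) :
    natRank x i < natRank x j ↔ x i < x j := by
  unfold natRank
  simp only [add_lt_add_iff_left]
  constructor
  · intro h
    by_contra hle
    push_neg at hle
    refine absurd (Finset.card_le_card ?_) (not_le.mpr h)
    intro k hk
    simp only [mem_filter, mem_univ, true_and] at hk ⊢
    exact lt_of_lt_of_le hk hle
  · intro h
    apply Finset.card_lt_card
    rw [Finset.ssubset_iff_of_subset]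
    · exact ⟨i, by simp [h], by simp⟩
    · intro k hk
      simp only [mem_filter, mem_univ, true_and] at hk ⊢
      exact hk.trans h

private lemma key {b : ℕ} {α β : Type*} [LinearOrder α] [LinearOrder β]
    (x : Fin b → α) (y : Fin b → β)
    (hx : Function.Injective x) (hy : Function.Injective y)
    (h : ∀ i, preRank x i = preRank y i) :
    ∀ i j : Fin b, j ≤ i → (x j < x i ↔ y j < y i) := by
  suffices H : ∀ n, ∀ i j : Fin b, i.val = n → j ≤ i → (x j < x i ↔ y j < y i) by
    intro i j hji; exact H i.val i j rfl hji
  intro n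
  induction n using Nat.strong_induction_on with
  | _ n ih =>
  intro i j hin hji
  have IH : ∀ k l : Fin b, k < i → l < i → (x k < x l ↔ y k < y l) := by
    intro k l hk hl
    rcases lt_trichotomy k l with h1 | h1 | h1
    · exact ih l.val (by simpa [Fin.lt_def, hin] using hl) l k rfl (le_of_lt h1)
    · subst h1; simp
    · have hkl := ih k.val (by simpa [Fin.lt_def, hin] using hk) k l rfl (le_of_lt h1)
      exact flip_iff (fun he => absurd (hx he) (ne_of_gt h1)) (fun he => absurd (hy he) (ne_of_gt h1)) hkl
  set S := univ.filter (fun j : Fin b => j ≤ i ∧ x j < x i) with hS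
  set T := univ.filter (fun j : Fin b => j ≤ i ∧ y j < y i) with hT
  have hcard : S.card = T.card := by
    have hh := h i
    simp only [preRank, ← hS, ← hT] at hh
    omega
  have hTS : T ⊆ S := by
    intro k hk
    by_contra hkS
    have hk' := hk
    simp only [hT, mem_filter, mem_univ, true_and] at hk
    obtain ⟨hki, hyk⟩ := hk
    simp only [hS, mem_filter, mem_univ, true_and, not_and] at hkS
    have hxk : ¬ x k < x i := hkS hki
    have hkne : k ≠ i := by
      rintro rfl; exact lt_irrefl _ hyk
    have hxik : x i < x k :=
      lt_of_le_of_ne (not_lt.mp hxk) (fun he => hkne (hx he.symm))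
    have hklt : k < i := lt_of_le_of_ne hki hkne
    have hsub : S ⊆ T.erase k := by
      intro m hm
      simp only [hS, mem_filter, mem_univ, true_and] at hm
      obtain ⟨hmi, hxm⟩ := hm
      have hmne : m ≠ i := fun he => absurd (he ▸ hxm) (lt_irrefl _)
      have hmlt : m < i := lt_of_le_of_ne hmi hmne
      have hxmk : x m < x k := hxm.trans hxik
      have hymk : y m < y k := (IH m k hmlt hklt).mp hxmk
      have : y m < y i := hymk.trans hyk
      refine Finset.mem_erase.mpr ⟨fun he => absurd (he ▸ hxmk) (lt_irrefl _), ?_⟩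
      simp only [hT, mem_filter, mem_univ, true_and]
      exact ⟨hmi, this⟩
    have h1 : S.card ≤ (T.erase k).card := Finset.card_le_card hsub
    have h2 : (T.erase k).card < T.card := Finset.card_erase_lt_of_mem hk'
    omega
  have hST : T = S := Finset.eq_of_subset_of_card_le hTS hcard.le
  constructor
  · intro hxx
    have : j ∈ S := by simp [hS, hji, hxx]
    rw [← hST] at this
    simp only [hT, mem_filter, mem_univ, true_and] at this
    exact this.2
  · intro hyy
    have : j ∈ T := by simp [hT, hji, hyy]
    rw [hST] at this
    simp only [hS, mem_filter, mem_univ, true_and] at this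
    exact this.2

/-- For injective strings `x` and `y` of the same length `b`,
`Pre(x) = Pre(y)` iff `Nat(x) = Nat(y)`. -/
theorem stmt5 {b : ℕ} {α β : Type*} [LinearOrder α] [LinearOrder β]
    (x : Fin b → α) (y : Fin b → β)
    (hx : Function.Injective x) (hy : Function.Injective y) :
    (∀ i, preRank x i = preRank y i) ↔ (∀ i, natRank x i = natRank y i) := by
  constructor
  · intro h i
    have k := key x y hx hy h
    have comp : ∀ p q : Fin b, x p < x q ↔ y p < y q := by
      intro p q
      rcases le_total p q with hpq | hqp
      · exact k q p hpq
      · rcases eq_or_lt_of_le hqp with rfl | hlt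
        · simp
        · exact flip_iff (fun he => absurd (hx he) (ne_of_gt hlt))
            (fun he => absurd (hy he) (ne_of_gt hlt)) (k p q hqp)
    unfold natRank
    congr 1
    apply congrArg Finset.card
    apply Finset.filter_congr
    intro j _
    simp [comp]
  · intro h
    have comp : ∀ p q : Fin b, x p < x q ↔ y p < y q := by
      intro p q
      rw [← natRank_lt_iff x p q, ← natRank_lt_iff y p q, h p, h q]
    intro i
    unfold preRank
    congr 1
    apply congrArg Finset.card
    apply Finset.filter_congr
    intro j _
    simp [comp]
end

section
/- Fix a prefix representation pattern, i.e., the prefix representation Pre(y) of some fixed string y of length b with distinct characters over an alphabet of size σ ≥ b. Then the number of strings x of length b with pairwise distinct characters from the alphabet such that Pre(x) = Pre(y) is exactly C(σ, b) (binomial coefficient). Consequently, since there are σ!/(σ−b)! such strings in total, the probability that a uniformly random injective string x of length b satisfies Pre(x) = Pre(y) is 1/b!. -/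
open Finset

section aux

variable {b : ℕ} {α : Type*} [LinearOrder α]

/-- Global rank of position `i`. -/
def ordRank (x : Fin b → α) (i : Fin b) : ℕ :=
  (univ.filter (fun j => x j < x i)).card

lemma ordRank_lt (x : Fin b → α) (i : Fin b) : ordRank x i < b := by
  have hsub : (univ.filter (fun j => x j < x i)) ⊆ univ.erase i := by
    intro j hj
    simp only [mem_filter, mem_univ, true_and] at hj
    refine mem_erase.2 ⟨?_, mem_univ _⟩
    rintro rfl; exact lt_irrefl _ hj
  calc ordRank x i ≤ (univ.erase i).card := card_le_card hsub
    _ < univ.card := card_erase_lt_of_mem (mem_univ i)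
    _ = b := by simp

lemma ordRank_lt_iff {x : Fin b → α} (hx : Function.Injective x) {i j : Fin b} :
    ordRank x i < ordRank x j ↔ x i < x j := by
  have key : ∀ i j : Fin b, x i < x j → ordRank x i < ordRank x j := by
    intro i j hij
    apply card_lt_card
    constructor
    · intro k hk
      simp only [mem_filter, mem_univ, true_and] at hk ⊢
      exact hk.trans hij
    · intro hsub
      have := hsub (mem_filter.2 ⟨mem_univ i, hij⟩)
      simp only [mem_filter, mem_univ, true_and] at this
      exact lt_irrefl _ this
  constructor
  · intro h
    rcases lt_trichotomy (x i) (x j) with h' | h' | h'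
    · exact h'
    · exfalso; rw [show i = j from hx h'] at h; exact lt_irrefl _ h
    · exact absurd (key _ _ h') (by omega)
  · exact key i j

lemma ordRank_injective {x : Fin b → α} (hx : Function.Injective x) :
    Function.Injective (ordRank x) := by
  intro i j h
  apply hx
  rcases lt_trichotomy (x i) (x j) with h' | h' | h'
  · exact absurd ((ordRank_lt_iff hx).2 h') (by omega)
  · exact h'
  · exact absurd ((ordRank_lt_iff hx).2 h') (by omega)

/-- Same pattern implies same preRank. -/
lemma preRank_eq_of_pattern {x y : Fin b → α}
    (h : ∀ i j : Fin b, x j < x i ↔ y j < y i) (i : Fin b) :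
    preRank x i = preRank y i := by
  unfold preRank
  have : (univ.filter (fun j => j ≤ i ∧ x j < x i))
      = (univ.filter (fun j => j ≤ i ∧ y j < y i)) := by
    ext j
    simp only [mem_filter, mem_univ, true_and]
    exact and_congr_right (fun _ => h i j)
  rw [this]

/-- Same preRank implies same pattern (for injective strings). -/
lemma pattern_of_preRank {x y : Fin b → α} (hx : Function.Injective x)
    (hy : Function.Injective y) (h : ∀ i, preRank x i = preRank y i) :
    ∀ i j : Fin b, x j < x i ↔ y j < y i := by
  suffices H : ∀ n : ℕ, ∀ i j : Fin b, i.val ≤ n → j.val ≤ n → (x j < x i ↔ y j < y i) by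
    intro i j
    exact H (max i.val j.val) i j (le_max_left _ _) (le_max_right _ _)
  intro n
  induction n with
  | zero =>
      intro i j hi hj
      have : i = j := Fin.ext (by omega)
      subst this; simp
  | succ n ih =>
      -- main claim: for i with val = n+1 and j < i, the iff holds
      have main : ∀ i j : Fin b, i.val = n + 1 → j < i → (x j < x i ↔ y j < y i) := by
        intro i j hi hji
        -- the two filtered sets
        set Sx := univ.filter (fun k : Fin b => k ≤ i ∧ x k < x i) with hSx
        set Sy := univ.filter (fun k : Fin b => k ≤ i ∧ y k < y i) with hSy
        have hcard : Sx.card = Sy.card := by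
          have h' := h i
          unfold preRank at h'
          rw [← hSx, ← hSy] at h'
          omega
        have hmemlt : ∀ k : Fin b, k ∈ Sx → k < i := by
          intro k hk
          simp only [hSx, mem_filter, mem_univ, true_and] at hk
          rcases lt_or_eq_of_le hk.1 with h' | h'
          · exact h'
          · exfalso; rw [h'] at hk; exact lt_irrefl _ hk.2
        have hmemlt' : ∀ k : Fin b, k ∈ Sy → k < i := by
          intro k hk
          simp only [hSy, mem_filter, mem_univ, true_and] at hk
          rcases lt_or_eq_of_le hk.1 with h' | h'
          · exact h'
          · exfalso; rw [h'] at hk; exact lt_irrefl _ hk.2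
        have hSeq : Sx = Sy := by
          by_contra hne
          have h1 : ¬ Sx ⊆ Sy := by
            intro hsub
            exact hne (eq_of_subset_of_card_le hsub (le_of_eq hcard.symm))
          have h2 : ¬ Sy ⊆ Sx := by
            intro hsub
            exact hne (eq_of_subset_of_card_le hsub (le_of_eq hcard)).symm
          obtain ⟨u, huX, huY⟩ := not_subset.1 h1
          obtain ⟨v, hvY, hvX⟩ := not_subset.1 h2
          have hui : u < i := hmemlt u huX
          have hvi : v < i := hmemlt' v hvY
          simp only [hSx, hSy, mem_filter, mem_univ, true_and, not_and] at huX huY hvY hvX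
          have hxu : x u < x i := huX.2
          have hyv : y v < y i := hvY.2
          have hyu : y i < y u := by
            have hne' : y u ≠ y i := fun e => absurd (hy e) (ne_of_lt hui)
            have := huY (le_of_lt hui)
            exact lt_of_le_of_ne (not_lt.1 this) hne'.symm
          have hxv : x i < x v := by
            have hne' : x v ≠ x i := fun e => absurd (hx e) (ne_of_lt hvi)
            have := hvX (le_of_lt hvi)
            exact lt_of_le_of_ne (not_lt.1 this) hne'.symm
          -- x u < x i < x v, so x u < x v, so by ih y u < y v
          have hxy : y u < y v := by
            have : x u < x v := hxu.trans hxv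
            exact (ih v u (by omega) (by omega)).1 this
          -- but y v < y i < y u
          have : y v < y u := hyv.trans hyu
          exact absurd hxy (asymm this)
        have hjx : (x j < x i) ↔ j ∈ Sx := by
          simp only [hSx, mem_filter, mem_univ, true_and]
          exact ⟨fun hh => ⟨le_of_lt hji, hh⟩, fun hh => hh.2⟩
        have hjy : (y j < y i) ↔ j ∈ Sy := by
          simp only [hSy, mem_filter, mem_univ, true_and]
          exact ⟨fun hh => ⟨le_of_lt hji, hh⟩, fun hh => hh.2⟩
        rw [hjx, hjy, hSeq]
      intro i j hi hj
      rcases Nat.lt_or_ge i.val (n + 1) with hi' | hi'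
      · rcases Nat.lt_or_ge j.val (n + 1) with hj' | hj'
        · exact ih i j (by omega) (by omega)
        · -- j.val = n+1, i < j
          have hj'' : j.val = n + 1 := by omega
          have hij : i < j := by
            rw [Fin.lt_def]; omega
          have hne : x j ≠ x i := fun e => absurd (hx e) (ne_of_gt hij)
          have hne' : y j ≠ y i := fun e => absurd (hy e) (ne_of_gt hij)
          have := main j i hj'' hij
          constructor
          · intro hh
            rcases lt_trichotomy (y j) (y i) with h' | h' | h'
            · exact h'
            · exact absurd h' hne'
            · exact absurd (this.2 h') (asymm hh)
          · intro hh
            rcases lt_trichotomy (x j) (x i) with h' | h' | h'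
            · exact h'
            · exact absurd h' hne
            · exact absurd (this.1 h') (asymm hh)
      · rcases Nat.lt_or_ge j.val (n + 1) with hj' | hj'
        · exact main i j (by omega) (by rw [Fin.lt_def]; omega)
        · have : i = j := Fin.ext (by omega)
          subst this; simp

lemma eq_of_card_filter_lt {S : Finset α} {a a' : α}
    (ha : a ∈ S) (ha' : a' ∈ S)
    (h : (S.filter (· < a)).card = (S.filter (· < a')).card) : a = a' := by
  have key : ∀ c c' : α, c ∈ S → c < c' →
      (S.filter (· < c)).card < (S.filter (· < c')).card := by
    intro c c' hc hcc'
    apply card_lt_card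
    constructor
    · intro k hk
      simp only [mem_filter] at hk ⊢
      exact ⟨hk.1, hk.2.trans hcc'⟩
    · intro hsub
      have := hsub (mem_filter.2 ⟨hc, hcc'⟩)
      simp only [mem_filter] at this
      exact lt_irrefl _ this.2
  rcases lt_trichotomy a a' with h' | h' | h'
  · exact absurd (key a a' ha h') (by omega)
  · exact h'
  · exact absurd (key a' a ha' h') (by omega)

end aux

/-- Fix an injective string `y` of length `b` over an alphabet of size `σ ≥ b`.
The number of injective strings `x` of length `b` with `Pre(x) = Pre(y)` is exactly
`C(σ, b)`; since there are `σ!/(σ−b)!` injective strings in total, the probability that a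
uniformly random injective string satisfies `Pre(x) = Pre(y)` is `1/b!`. -/
theorem stmt6 {α : Type*} [LinearOrder α] [Fintype α] (b : ℕ)
    (hb : b ≤ Fintype.card α) (y : Fin b → α) (hy : Function.Injective y) :
    (univ.filter (fun x : Fin b → α => Function.Injective x ∧
        ∀ i, preRank x i = preRank y i)).card = (Fintype.card α).choose b ∧
    (univ.filter (fun x : Fin b → α => Function.Injective x)).card
      = (Fintype.card α).factorial / (Fintype.card α - b).factorial ∧
    ((univ.filter (fun x : Fin b → α => Function.Injective x ∧
        ∀ i, preRank x i = preRank y i)).card : ℚ)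
      / (univ.filter (fun x : Fin b → α => Function.Injective x)).card
      = 1 / b.factorial := by
  classical
  -- Part 1: bijection with b-subsets
  have part1 : (univ.filter (fun x : Fin b → α => Function.Injective x ∧
        ∀ i, preRank x i = preRank y i)).card = (Fintype.card α).choose b := by
    rw [← Finset.card_univ, ← Finset.card_powersetCard]
    apply Finset.card_bij (fun x _ => Finset.image x univ)
    · intro x hx
      simp only [mem_filter, mem_univ, true_and] at hx
      rw [mem_powersetCard]
      exact ⟨subset_univ _, by rw [card_image_of_injective _ hx.1, card_univ, Fintype.card_fin]⟩
    · -- injectivity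
      intro x hxmem x' hx'mem himg
      simp only [mem_filter, mem_univ, true_and] at hxmem hx'mem
      obtain ⟨hxinj, hxpre⟩ := hxmem
      obtain ⟨hx'inj, hx'pre⟩ := hx'mem
      have hpat : ∀ i j : Fin b, x j < x i ↔ x' j < x' i := by
        intro i j
        rw [pattern_of_preRank hxinj hy hxpre i j,
            pattern_of_preRank hx'inj hy hx'pre i j]
      funext i
      apply eq_of_card_filter_lt (S := Finset.image x univ)
        (mem_image_of_mem x (mem_univ i))
        (by rw [himg]; exact mem_image_of_mem x' (mem_univ i))
      have e1 : (Finset.image x univ).filter (· < x i)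
          = Finset.image x (univ.filter (fun j => x j < x i)) := by
        ext a
        simp only [mem_filter, mem_image, mem_univ, true_and]
        constructor
        · rintro ⟨⟨j, rfl⟩, hlt⟩; exact ⟨j, hlt, rfl⟩
        · rintro ⟨j, hlt, rfl⟩; exact ⟨⟨j, rfl⟩, hlt⟩
      have e2 : (Finset.image x univ).filter (· < x' i)
          = Finset.image x' (univ.filter (fun j => x' j < x' i)) := by
        rw [himg]
        ext a
        simp only [mem_filter, mem_image, mem_univ, true_and]
        constructor
        · rintro ⟨⟨j, rfl⟩, hlt⟩; exact ⟨j, hlt, rfl⟩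
        · rintro ⟨j, hlt, rfl⟩; exact ⟨⟨j, rfl⟩, hlt⟩
      rw [e1, e2, card_image_of_injective _ hxinj, card_image_of_injective _ hx'inj]
      congr 1
      ext j
      simp only [mem_filter, mem_univ, true_and]
      exact hpat i j
    · -- surjectivity
      intro S hS
      rw [mem_powersetCard] at hS
      obtain ⟨-, hScard⟩ := hS
      set e := S.orderIsoOfFin hScard with he
      set x : Fin b → α := fun i => (e ⟨ordRank y i, ordRank_lt y i⟩ : α) with hxdef
      have hxinj : Function.Injective x := by
        intro i j hij
        apply ordRank_injective hy
        have : (⟨ordRank y i, ordRank_lt y i⟩ : Fin b) = ⟨ordRank y j, ordRank_lt y j⟩ := by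
          apply e.injective
          exact Subtype.ext hij
        exact congrArg Fin.val this
      have hpat : ∀ i j : Fin b, x j < x i ↔ y j < y i := by
        intro i j
        have : x j < x i ↔ (⟨ordRank y j, ordRank_lt y j⟩ : Fin b)
            < ⟨ordRank y i, ordRank_lt y i⟩ := by
          simp only [hxdef]
          exact Iff.trans Subtype.coe_lt_coe e.lt_iff_lt
        rw [this, Fin.mk_lt_mk]
        exact (ordRank_lt_iff hy).trans Iff.rfl
      refine ⟨x, ?_, ?_⟩
      · simp only [mem_filter, mem_univ, true_and]
        exact ⟨hxinj, fun i => preRank_eq_of_pattern hpat i⟩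
      · -- image x univ = S
        apply eq_of_subset_of_card_le
        · intro a ha
          simp only [mem_image, mem_univ, true_and] at ha
          obtain ⟨i, rfl⟩ := ha
          exact (e ⟨ordRank y i, ordRank_lt y i⟩).2
        · rw [card_image_of_injective _ hxinj, card_univ, Fintype.card_fin, hScard]
  have part2desc : (univ.filter (fun x : Fin b → α => Function.Injective x)).card
      = (Fintype.card α).descFactorial b := by
    rw [← Fintype.card_subtype]
    rw [Fintype.card_congr (Equiv.subtypeInjectiveEquivEmbedding (Fin b) α)]
    rw [Fintype.card_embedding_eq, Fintype.card_fin]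
  have part2 : (univ.filter (fun x : Fin b → α => Function.Injective x)).card
      = (Fintype.card α).factorial / (Fintype.card α - b).factorial := by
    rw [part2desc, Nat.descFactorial_eq_div hb]
  refine ⟨part1, part2, ?_⟩
  rw [part1, part2desc, Nat.descFactorial_eq_factorial_mul_choose]
  have hch : (0 : ℚ) < ((Fintype.card α).choose b : ℚ) := by
    exact_mod_cast Nat.choose_pos hb
  have hfac : (0 : ℚ) < (b.factorial : ℚ) := by
    exact_mod_cast Nat.factorial_pos b
  push_cast
  field_simp
end

section
/- Let x and y be strings of the same length n, and suppose Nat(x) = Nat(y). Then for every index i, LMax_x[i] = LMax_y[i] and LMin_x[i] = LMin_y[i]; that is, order-isomorphic strings have the same nearest neighbor representation. -/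
open Finset

/-- `j = LMax_x[i]`: `j` is the rightmost index `j < i` with
`x[j] = max{x[k] : k < i, x[k] ≤ x[i]}`. -/
def IsLMax {n : ℕ} {α : Type*} [LinearOrder α] (x : Fin n → α) (i j : Fin n) : Prop :=
  j < i ∧ x j ≤ x i ∧ (∀ k, k < i → x k ≤ x i → x k ≤ x j) ∧
    (∀ k, j < k → k < i → x k ≤ x i → x k < x j)

/-- `j = LMin_x[i]`: `j` is the rightmost index `j < i` with
`x[j] = min{x[k] : k < i, x[k] ≥ x[i]}`. -/
def IsLMin {n : ℕ} {α : Type*} [LinearOrder α] (x : Fin n → α) (i j : Fin n) : Prop :=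
  j < i ∧ x i ≤ x j ∧ (∀ k, k < i → x i ≤ x k → x j ≤ x k) ∧
    (∀ k, j < k → k < i → x i ≤ x k → x j < x k)

private theorem rank_mono {n : ℕ} {γ : Type*} [LinearOrder γ] (z : Fin n → γ) (i j : Fin n) :
    z i ≤ z j ↔ natRank z i ≤ natRank z j := by
  constructor
  · intro hle
    unfold natRank
    have : (univ.filter (fun k => z k < z i)) ⊆ (univ.filter (fun k => z k < z j)) :=
      fun k hk => by
        simp only [mem_filter, mem_univ, true_and] at *
        exact lt_of_lt_of_le hk hle
    have := Finset.card_le_card this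
    omega
  · intro hle
    by_contra hlt
    push_neg at hlt
    have hss : (univ.filter (fun k => z k < z j)) ⊂ (univ.filter (fun k => z k < z i)) := by
      constructor
      · intro k hk
        simp only [mem_filter, mem_univ, true_and] at *
        exact hk.trans hlt
      · intro hsub
        have := hsub (by simp [hlt] : j ∈ univ.filter (fun k => z k < z i))
        simp at this
    have := Finset.card_lt_card hss
    unfold natRank at hle
    omega

/-- Order-isomorphic strings (`Nat(x) = Nat(y)`) have the same nearest neighbor
representation: the same `LMax` and `LMin` at every index (including absence,
i.e. the `−∞`/`∞` cases). -/
theorem stmt8 {n : ℕ} {α β : Type*} [LinearOrder α] [LinearOrder β]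
    (x : Fin n → α) (y : Fin n → β)
    (h : ∀ i, natRank x i = natRank y i) :
    ∀ i j, (IsLMax x i j ↔ IsLMax y i j) ∧ (IsLMin x i j ↔ IsLMin y i j) := by
  have key : ∀ (i j : Fin n), x i ≤ x j ↔ y i ≤ y j := by
    intro i j
    rw [rank_mono x, rank_mono y, h, h]
  have keylt : ∀ (i j : Fin n), x i < x j ↔ y i < y j := by
    intro i j
    rw [← not_le, ← not_le, key]
  intro i j
  refine ⟨?_, ?_⟩
  · unfold IsLMax; simp only [key, keylt]
  · unfold IsLMin; simp only [key, keylt]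
end

section
/- For any string x and any index i with 1 ≤ i ≤ |x|, Nat(x)[LMax_x[i]] ≤ Nat(x)[i] ≤ Nat(x)[LMin_x[i]], using the conventions Nat(x)[−∞] = 0 and Nat(x)[∞] = |x| + 1. -/
open Finset

/-- `Nat(x)[LMax_x[i]] ≤ Nat(x)[i] ≤ Nat(x)[LMin_x[i]]`. The conventions
`Nat(x)[−∞] = 0` and `Nat(x)[∞] = n + 1` are covered by `1 ≤ Nat(x)[i] ≤ n`. -/
theorem stmt10 {n : ℕ} {α : Type*} [LinearOrder α] (x : Fin n → α) :
    ∀ i : Fin n,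
      (∀ j, IsLMax x i j → natRank x j ≤ natRank x i) ∧
      (∀ j, IsLMin x i j → natRank x i ≤ natRank x j) ∧
      1 ≤ natRank x i ∧ natRank x i ≤ n := by
  have mono : ∀ a b : Fin n, x a ≤ x b → natRank x a ≤ natRank x b := by
    intro a b h
    unfold natRank
    gcongr 1 + ?_
    apply Finset.card_le_card
    intro k hk
    simp only [mem_filter, mem_univ, true_and] at *
    exact lt_of_lt_of_le hk h
  intro i
  refine ⟨fun j hj => mono j i hj.2.1, fun j hj => mono i j hj.2.1, Nat.le_add_right 1 _, ?_⟩
  have hsub : (univ.filter (fun j => x j < x i)) ⊆ univ.erase i := by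
    intro k hk
    simp only [mem_filter, mem_univ, true_and, mem_erase] at *
    exact ⟨fun h => absurd (h ▸ hk) (lt_irrefl _), trivial⟩
  have := Finset.card_le_card hsub
  rw [Finset.card_erase_of_mem (mem_univ i), Finset.card_univ, Fintype.card_fin] at this
  have hn : 0 < n := i.pos
  show 1 + _ ≤ n
  omega
end
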